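/- Let (Ω, F, P) be a probability space and let X_1, X_2, … : Ω → ℕ be independent and identically distributed random variables with common probability mass function p satisfying H(p) < ∞. For each m let P̂^m denote the empirical distribution of the first m observations, P̂^m(r)(ω) = (1/m) #{k ≤ m : X_k(ω) = r}. Then, with probability 1, the plug-in entropy converges to the true entropy: lim_{m→∞} Σ_r −P̂^m(r) log P̂^m(r) = H(p). -/

import Mathlib

open MeasureTheory ProbabilityTheory Filter Real
open Finset Topology

/-!
Two consequences of the strong law of large numbers hold almost surely: every empirical frequency
converges to `p r`, and the empirical cross-entropy `(1/m) ∑_{k<m} -log p(X_k)` converges to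
`E[-log p(X_0)] = H(p)`. Gibbs' inequality bounds the plug-in entropy by that cross-entropy, which
gives the upper bound; the lower bound is Fatou's lemma for series, since `-x log x` is continuous
and nonnegative on `[0, 1]`.
-/

theorem tendsto_tsum_of_tendsto_of_eventually_le {ι α : Type*} {l : Filter α}
    {f : α → ι → ℝ} {g : ι → ℝ} {a : α → ℝ}
    (hf0 : ∀ x i, 0 ≤ f x i) (hfs : ∀ x, Summable (f x))
    (hfg : ∀ i, Tendsto (f · i) l (𝓝 (g i))) (hg : Summable g)
    (ha : Tendsto a l (𝓝 (∑' i, g i))) (hle : ∀ᶠ x in l, ∑' i, f x i ≤ a x) :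
    Tendsto (fun x => ∑' i, f x i) l (𝓝 (∑' i, g i)) := by
  refine tendsto_order.2 ⟨fun b hb => ?_, fun b hb => ?_⟩
  · obtain ⟨s, hs⟩ := (hg.hasSum.eventually (lt_mem_nhds hb)).exists
    filter_upwards [(tendsto_finsetSum s fun i _ => hfg i).eventually (lt_mem_nhds hs)]
      with x hx
    exact hx.trans_le ((hfs x).sum_le_tsum s fun i _ => hf0 x i)
  · filter_upwards [ha.eventually (gt_mem_nhds hb), hle] with x hxb hxa
    exact hxa.trans_lt hxb

theorem negMulLog_le_mul_neg_log_add_sub {c q : ℝ} (hc : 0 ≤ c) (hq : 0 < q) :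
    negMulLog c ≤ c * -log q + (q - c) := by
  rcases hc.eq_or_lt with rfl | hc
  · simpa using hq.le
  have hlog : log q - log c ≤ q / c - 1 := by
    rw [← log_div hq.ne' hc.ne']
    exact log_le_sub_one_of_pos (by positivity)
  have hmul : c * (q / c - 1) = q - c := by field_simp
  have := mul_le_mul_of_nonneg_left hlog hc.le
  rw [negMulLog]
  linarith

section Empirical

variable {α : Type*} [DecidableEq α]

noncomputable def empiricalFreq (x : ℕ → α) (m : ℕ) (r : α) : ℝ :=
  (#{k ∈ range m | x k = r} : ℝ) / m

variable {x : ℕ → α} {m : ℕ}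

theorem empiricalFreq_nonneg (r : α) : 0 ≤ empiricalFreq x m r := by
  unfold empiricalFreq
  positivity

theorem empiricalFreq_le_one (r : α) : empiricalFreq x m r ≤ 1 := by
  refine div_le_one_of_le₀ ?_ m.cast_nonneg
  exact_mod_cast (card_filter_le _ _).trans_eq (card_range m)

theorem empiricalFreq_eq_zero_of_notMem {r : α} (hr : r ∉ (range m).image x) :
    empiricalFreq x m r = 0 := by
  rw [empiricalFreq, filter_eq_empty_iff.2 fun k hk hkr => hr (mem_image.2 ⟨k, hk, hkr⟩)]
  simp

theorem empiricalFreq_eq_average (r : α) :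
    empiricalFreq x m r = (∑ k ∈ range m, if x k = r then (1 : ℝ) else 0) / m := by
  rw [empiricalFreq, sum_boole]

theorem sum_empiricalFreq_mul (f : α → ℝ) :
    ∑ r ∈ (range m).image x, empiricalFreq x m r * f r = (∑ k ∈ range m, f (x k)) / m := by
  rw [← sum_fiberwise_of_maps_to (fun k hk => mem_image_of_mem x hk), sum_div]
  refine sum_congr rfl fun r _ => ?_
  rw [sum_congr rfl fun k hk => congrArg f (mem_filter.1 hk).2, sum_const, nsmul_eq_mul,
    empiricalFreq]
  ring

theorem sum_empiricalFreq (hm : 0 < m) : ∑ r ∈ (range m).image x, empiricalFreq x m r = 1 := by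
  simpa [hm.ne'] using sum_empiricalFreq_mul (x := x) (m := m) fun _ => 1

theorem summable_negMulLog_empiricalFreq : Summable fun r => negMulLog (empiricalFreq x m r) :=
  summable_of_ne_finset_zero fun r hr => by
    rw [empiricalFreq_eq_zero_of_notMem hr, negMulLog_zero]

theorem tsum_negMulLog_empiricalFreq_le {p : α → ℝ} (hp0 : ∀ r, 0 ≤ p r) (hp1 : HasSum p 1)
    (hx : ∀ k, 0 < p (x k)) (hm : 0 < m) :
    ∑' r, negMulLog (empiricalFreq x m r) ≤ (∑ k ∈ range m, -log (p (x k))) / m := by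
  set S := (range m).image x
  have hpS : ∑ r ∈ S, p r ≤ 1 := sum_le_hasSum S (fun r _ => hp0 r) hp1
  calc ∑' r, negMulLog (empiricalFreq x m r) = ∑ r ∈ S, negMulLog (empiricalFreq x m r) :=
        tsum_eq_sum fun r hr => by rw [empiricalFreq_eq_zero_of_notMem hr, negMulLog_zero]
    _ ≤ ∑ r ∈ S, (empiricalFreq x m r * -log (p r) + (p r - empiricalFreq x m r)) := by
        refine sum_le_sum fun r hr => ?_
        obtain ⟨k, -, rfl⟩ := mem_image.1 hr
        exact negMulLog_le_mul_neg_log_add_sub (empiricalFreq_nonneg _) (hx k)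
    _ = (∑ k ∈ range m, -log (p (x k))) / m + (∑ r ∈ S, p r - 1) := by
        rw [sum_add_distrib, sum_sub_distrib, sum_empiricalFreq_mul, sum_empiricalFreq hm]
    _ ≤ (∑ k ∈ range m, -log (p (x k))) / m := by linarith

end Empirical

section DiscreteLaw

variable {Ω α : Type*} [MeasurableSpace Ω] {μ : Measure Ω}
  [MeasurableSpace α] [MeasurableSingletonClass α] {Y : Ω → α} {p : α → ℝ}

theorem map_apply_singleton_of_law (hY : Measurable Y)
    (hlaw : ∀ r, μ {ω | Y ω = r} = ENNReal.ofReal (p r)) (r : α) :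
    μ.map Y {r} = ENNReal.ofReal (p r) := by
  rw [Measure.map_apply hY (measurableSet_singleton r)]
  exact hlaw r

variable [Countable α]

theorem identDistrib_of_measure_preimage_singleton_eq {Z : Ω → α}
    (hY : Measurable Y) (hZ : Measurable Z) (h : ∀ r, μ {ω | Y ω = r} = μ {ω | Z ω = r}) :
    IdentDistrib Y Z μ μ := by
  refine ⟨hY.aemeasurable, hZ.aemeasurable, Measure.ext_of_singleton fun r => ?_⟩
  rw [Measure.map_apply hY (measurableSet_singleton r),
    Measure.map_apply hZ (measurableSet_singleton r)]
  exact h r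

theorem integrable_comp_of_law (hY : Measurable Y)
    (hlaw : ∀ r, μ {ω | Y ω = r} = ENNReal.ofReal (p r)) (hp0 : ∀ r, 0 ≤ p r)
    {f : α → ℝ} (hf : Summable fun r => ‖f r‖ * p r) :
    Integrable (fun ω => f (Y ω)) μ := by
  refine (integrable_map_measure (measurable_of_countable f).aestronglyMeasurable
    hY.aemeasurable).1 ⟨(measurable_of_countable f).aestronglyMeasurable, ?_⟩
  rw [HasFiniteIntegral, lintegral_countable']
  simp_rw [map_apply_singleton_of_law hY hlaw, ← ofReal_norm,
    ← ENNReal.ofReal_mul (norm_nonneg _)]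
  rw [← ENNReal.ofReal_tsum_of_nonneg (fun r => mul_nonneg (norm_nonneg _) (hp0 r)) hf]
  exact ENNReal.ofReal_lt_top

theorem integral_comp_eq_tsum_of_law (hY : Measurable Y)
    (hlaw : ∀ r, μ {ω | Y ω = r} = ENNReal.ofReal (p r)) (hp0 : ∀ r, 0 ≤ p r)
    {f : α → ℝ} (hint : Integrable (fun ω => f (Y ω)) μ) :
    ∫ ω, f (Y ω) ∂μ = ∑' r, p r * f r := by
  have hf := measurable_of_countable f
  rw [← integral_map hY.aemeasurable hf.aestronglyMeasurable,
    integral_countable ((integrable_map_measure hf.aestronglyMeasurable hY.aemeasurable).2 hint)]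
  refine tsum_congr fun r => ?_
  rw [measureReal_def, map_apply_singleton_of_law hY hlaw, ENNReal.toReal_ofReal (hp0 r),
    smul_eq_mul]

theorem ae_pos_comp_of_law (hY : Measurable Y)
    (hlaw : ∀ r, μ {ω | Y ω = r} = ENNReal.ofReal (p r)) :
    ∀ᵐ ω ∂μ, 0 < p (Y ω) := by
  refine ae_of_ae_map (p := fun r => 0 < p r) hY.aemeasurable
    (ae_iff_of_countable.2 fun r hr => ?_)
  rw [map_apply_singleton_of_law hY hlaw] at hr
  exact not_le.1 (mt ENNReal.ofReal_eq_zero.2 hr)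

end DiscreteLaw

section IID

variable {Ω α : Type*} [MeasurableSpace Ω] {μ : Measure Ω}
  [MeasurableSpace α] [Countable α] [MeasurableSingletonClass α]
  {X : ℕ → Ω → α} {p : α → ℝ}

theorem ae_tendsto_average_comp (hindep : iIndepFun X μ)
    (hident : ∀ k, IdentDistrib (X k) (X 0) μ μ) {f : α → ℝ}
    (hint : Integrable (fun ω => f (X 0 ω)) μ) :
    ∀ᵐ ω ∂μ, Tendsto (fun m : ℕ => (∑ k ∈ range m, f (X k ω)) / m) atTop
      (𝓝 (∫ ω, f (X 0 ω) ∂μ)) :=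
  have hf := measurable_of_countable f
  strong_law_ae_real (fun k ω => f (X k ω)) hint
    (fun _ _ hij => (hindep.indepFun hij).comp hf hf) fun k => (hident k).comp hf

theorem identDistrib_of_law (hmeas : ∀ k, Measurable (X k))
    (hlaw : ∀ k r, μ {ω | X k ω = r} = ENNReal.ofReal (p r)) (k : ℕ) :
    IdentDistrib (X k) (X 0) μ μ :=
  identDistrib_of_measure_preimage_singleton_eq (hmeas k) (hmeas 0) fun r =>
    (hlaw k r).trans (hlaw 0 r).symm

theorem ae_tendsto_average_neg_log (hmeas : ∀ k, Measurable (X k)) (hindep : iIndepFun X μ)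
    (hp0 : ∀ r, 0 ≤ p r) (hp1 : HasSum p 1)
    (hlaw : ∀ k r, μ {ω | X k ω = r} = ENNReal.ofReal (p r))
    (hH : Summable fun r => negMulLog (p r)) :
    ∀ᵐ ω ∂μ, Tendsto (fun m : ℕ => (∑ k ∈ range m, -log (p (X k ω))) / m) atTop
      (𝓝 (∑' r, negMulLog (p r))) := by
  have hnorm r : ‖-log (p r)‖ * p r = negMulLog (p r) := by
    have hp_le : p r ≤ 1 := le_hasSum hp1 r fun j _ => hp0 j
    rw [norm_of_nonneg (neg_nonneg.2 (log_nonpos (hp0 r) hp_le)), negMulLog]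
    ring
  have hint : Integrable (fun ω => -log (p (X 0 ω))) μ :=
    integrable_comp_of_law (f := fun r => -log (p r)) (hmeas 0) (hlaw 0) hp0
      (hH.congr fun r => (hnorm r).symm)
  have hmean : ∫ ω, -log (p (X 0 ω)) ∂μ = ∑' r, negMulLog (p r) := by
    rw [integral_comp_eq_tsum_of_law (f := fun r => -log (p r)) (hmeas 0) (hlaw 0) hp0 hint]
    exact tsum_congr fun r => by rw [negMulLog, neg_mul, mul_neg]
  rw [← hmean]
  exact ae_tendsto_average_comp (f := fun r => -log (p r)) hindep
    (identDistrib_of_law hmeas hlaw) hint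

theorem ae_tendsto_empiricalFreq [DecidableEq α] (hmeas : ∀ k, Measurable (X k))
    (hindep : iIndepFun X μ) (hp0 : ∀ r, 0 ≤ p r)
    (hlaw : ∀ k r, μ {ω | X k ω = r} = ENNReal.ofReal (p r)) :
    ∀ᵐ ω ∂μ, ∀ r, Tendsto (fun m => empiricalFreq (X · ω) m r) atTop (𝓝 (p r)) := by
  refine ae_all_iff.2 fun r => ?_
  set f : α → ℝ := fun s => if s = r then 1 else 0
  have hint : Integrable (fun ω => f (X 0 ω)) μ :=
    integrable_comp_of_law (hmeas 0) (hlaw 0) hp0 <| summable_of_ne_finset_zero (s := {r})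
      fun s hs => by simp [f, mem_singleton.not.1 hs]
  have hmean : ∫ ω, f (X 0 ω) ∂μ = p r := by
    rw [integral_comp_eq_tsum_of_law (hmeas 0) (hlaw 0) hp0 hint]
    simp [f]
  filter_upwards [ae_tendsto_average_comp hindep (identDistrib_of_law hmeas hlaw) hint] with ω hω
  simpa only [empiricalFreq_eq_average, hmean] using hω

end IID

theorem plugin_entropy_consistency_general
    {Ω : Type*} [MeasurableSpace Ω] (μ : Measure Ω)
    (X : ℕ → Ω → ℕ) (hmeas : ∀ k, Measurable (X k))
    (hindep : iIndepFun X μ)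
    (p : ℕ → ℝ) (hp0 : ∀ r, 0 ≤ p r) (hp1 : HasSum p 1)
    (hlaw : ∀ k r, μ {ω | X k ω = r} = ENNReal.ofReal (p r))
    (hH : Summable (fun r => -(p r) * log (p r)))
    (Phat : ℕ → Ω → ℕ → ℝ)
    (hPhat : ∀ m ω r,
      Phat m ω r = (((Finset.range m).filter (fun k => X k ω = r)).card : ℝ) / m) :
    ∀ᵐ ω ∂μ, Tendsto (fun m => ∑' r, -(Phat m ω r) * log (Phat m ω r))
      atTop (nhds (∑' r, -(p r) * log (p r))) := by
  have hPhat_eq m ω : Phat m ω = empiricalFreq (X · ω) m := funext (hPhat m ω)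
  filter_upwards [ae_tendsto_empiricalFreq hmeas hindep hp0 hlaw,
    ae_tendsto_average_neg_log hmeas hindep hp0 hp1 hlaw hH,
    ae_all_iff.2 fun k => ae_pos_comp_of_law (hmeas k) (hlaw k)] with ω hfreq hcross hpos
  simp only [hPhat_eq]
  exact tendsto_tsum_of_tendsto_of_eventually_le
    (fun m r => negMulLog_nonneg (empiricalFreq_nonneg r) (empiricalFreq_le_one r))
    (fun _ => summable_negMulLog_empiricalFreq)
    (fun r => (continuous_negMulLog.tendsto (p r)).comp (hfreq r)) hH hcross
    (eventually_atTop.2 ⟨1, fun m hm => tsum_negMulLog_empiricalFreq_le hp0 hp1 hpos hm⟩)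

/-- Strong consistency of the plug-in entropy estimator: for i.i.d. `ℕ`-valued
random variables with common probability mass function `p` of finite entropy,
the entropy of the empirical distribution converges almost surely to `H(p)`. -/
theorem plugin_entropy_consistency
    {Ω : Type*} [MeasurableSpace Ω] (μ : Measure Ω) [IsProbabilityMeasure μ]
    (X : ℕ → Ω → ℕ) (hmeas : ∀ k, Measurable (X k))
    (hindep : iIndepFun X μ)
    (p : ℕ → ℝ) (hp0 : ∀ r, 0 ≤ p r) (hp1 : HasSum p 1)
    (hlaw : ∀ k r, μ {ω | X k ω = r} = ENNReal.ofReal (p r))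
    (hH : Summable (fun r => -(p r) * log (p r)))
    (Phat : ℕ → Ω → ℕ → ℝ)
    (hPhat : ∀ m ω r,
      Phat m ω r = (((Finset.range m).filter (fun k => X k ω = r)).card : ℝ) / m) :
    ∀ᵐ ω ∂μ, Tendsto (fun m => ∑' r, -(Phat m ω r) * log (Phat m ω r))
      atTop (nhds (∑' r, -(p r) * log (p r))) :=
  plugin_entropy_consistency_general μ X hmeas hindep p hp0 hp1 hlaw hH Phat hPhat
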